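/- arXiv:2204.06759 — 2 statements merged into one kernel-verified Lean document; each statement's English description precedes it below -/
import Mathlib

section
/- (Monotonically increasing lower bounds, Proposition 2 key step.) Let n, m, p ∈ ℕ with p ≥ 2, b : Fin n → Fin p a block assignment map, C, A_1, …, A_m real symmetric n×n matrices and g ∈ ℝ^m. Suppose y ∈ D(V) for some real n×n matrix V (i.e. C − Σ_{i=1}^m y_i A_i ∈ FW_b(V)), set Z := C − Σ_{i=1}^m y_i A_i, and let V' be any real n×n matrix with V'ᵀ V' = Z (e.g. a Cholesky factor of Z). Then y ∈ D(V'); consequently, if the set {gᵀ z : z ∈ D(V')} is bounded above, its supremum is at least gᵀ y. In particular the optimal values L^t of the iterative outer approximation with V_{t+1} = chol(C − Σ_i y_i^{t,⋆} A_i) satisfy L^1 ≤ L^2 ≤ … ≤ L^t ≤ L^{t+1}. -/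
open Matrix Finset

/-- `A` is block factor-width-two w.r.t. the block assignment map `b`:
`A = ∑_{k<l} Q k l` with each `Q k l` positive semidefinite and supported on blocks `k`, `l`. -/
def memFW {n p : ℕ} (b : Fin n → Fin p) (A : Matrix (Fin n) (Fin n) ℝ) : Prop :=
  ∃ Q : Fin p → Fin p → Matrix (Fin n) (Fin n) ℝ,
    (∀ k l : Fin p, k < l → (Q k l).PosSemidef) ∧
    (∀ k l : Fin p, k < l → ∀ i j : Fin n,
      (b i ≠ k ∧ b i ≠ l) ∨ (b j ≠ k ∧ b j ≠ l) → Q k l i j = 0) ∧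
    A = ∑ k : Fin p, ∑ l ∈ Finset.Ioi k, Q k l

/-- The cone `FW_b(V) = { Vᵀ Q V : Q ∈ FW_b }`. -/
def memFWV {n p : ℕ} (b : Fin n → Fin p) (V M : Matrix (Fin n) (Fin n) ℝ) : Prop :=
  ∃ Q, memFW b Q ∧ M = Vᵀ * Q * V

/-- Dual inner-approximation feasible set at `V`:
`y` such that `C − ∑ i, y i • A i ∈ FW_b(V)`. -/
def Dset {n m p : ℕ} (b : Fin n → Fin p) (C : Matrix (Fin n) (Fin n) ℝ)
    (A : Fin m → Matrix (Fin n) (Fin n) ℝ)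
    (V : Matrix (Fin n) (Fin n) ℝ) : Set (Fin m → ℝ) :=
  {y | memFWV b V (C - ∑ i : Fin m, y i • A i)}

/-!
The residual `Z = C - ∑ i, y i • A i` factors as `Z = V'ᵀ * 1 * V'`, so `y ∈ D(V')` as soon as
the identity lies in `FW_b`. It does when there are at least two blocks: each diagonal unit
`e_i e_iᵀ` is positive semidefinite and supported on the pair of blocks formed by `b i` and any
other block. The bound on the supremum is then just membership of `gᵀ y` in the set.
-/

section FactorWidthTwo

variable {n p : ℕ} {b : Fin n → Fin p}

theorem memFW_zero : memFW b 0 :=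
  ⟨0, fun _ _ _ => PosSemidef.zero, fun _ _ _ _ _ _ => rfl, by simp⟩

theorem memFW.add {M N : Matrix (Fin n) (Fin n) ℝ} (hM : memFW b M) (hN : memFW b N) :
    memFW b (M + N) := by
  obtain ⟨Q, hQ_psd, hQ_supp, rfl⟩ := hM
  obtain ⟨R, hR_psd, hR_supp, rfl⟩ := hN
  refine ⟨Q + R, fun k l hkl => (hQ_psd k l hkl).add (hR_psd k l hkl), ?_, ?_⟩
  · intro k l hkl i j hij
    simp [hQ_supp k l hkl i j hij, hR_supp k l hkl i j hij]
  · simp only [Pi.add_apply, Finset.sum_add_distrib]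

theorem memFW_sum {ι : Type*} (s : Finset ι) {M : ι → Matrix (Fin n) (Fin n) ℝ}
    (hM : ∀ i ∈ s, memFW b (M i)) : memFW b (∑ i ∈ s, M i) :=
  Finset.sum_induction M (memFW b) (fun _ _ => memFW.add) memFW_zero hM

theorem memFW_of_blockSupported {k l : Fin p} (hkl : k < l) {M : Matrix (Fin n) (Fin n) ℝ}
    (hM : M.PosSemidef)
    (hsupp : ∀ i j, (b i ≠ k ∧ b i ≠ l) ∨ (b j ≠ k ∧ b j ≠ l) → M i j = 0) :
    memFW b M := by
  refine ⟨Pi.single k (Pi.single l M), ?_, ?_, ?_⟩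
  · intro k' l' _
    by_cases hk : k' = k <;> by_cases hl : l' = l <;> simp [hk, hl, hM, PosSemidef.zero]
  · intro k' l' _ i j hij
    by_cases hk : k' = k <;> by_cases hl : l' = l <;> simp_all
  · rw [Fintype.sum_eq_single k fun k' hk' => by simp [hk']]
    simp [Finset.sum_pi_single', hkl]

theorem exists_lt_and_mem_pair (hp : 2 ≤ p) (c : Fin p) :
    ∃ k l : Fin p, k < l ∧ (c = k ∨ c = l) := by
  by_cases hc : (c : ℕ) = 0
  · exact ⟨c, ⟨1, by omega⟩, Fin.lt_def.mpr (by simp [hc]), Or.inl rfl⟩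
  · exact ⟨⟨0, by omega⟩, c, Fin.lt_def.mpr (by simp; omega), Or.inr rfl⟩

theorem memFW_diagonal_single (hp : 2 ≤ p) (i : Fin n) {c : ℝ} (hc : 0 ≤ c) :
    memFW b (diagonal (Pi.single i c)) := by
  obtain ⟨k, l, hkl, hbi⟩ := exists_lt_and_mem_pair hp (b i)
  refine memFW_of_blockSupported hkl (PosSemidef.diagonal (Pi.single_nonneg.mpr hc)) ?_
  intro i' j' hij'
  by_cases h : i' = j' ∧ i' = i
  · obtain ⟨rfl, rfl⟩ := h
    tauto
  · rcases not_and_or.mp h with hne | hne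
    · exact diagonal_apply_ne _ hne
    · simp [diagonal_apply, hne]

theorem memFW_diagonal (hp : 2 ≤ p) {d : Fin n → ℝ} (hd : 0 ≤ d) : memFW b (diagonal d) := by
  rw [← Finset.univ_sum_single d, ← diagonalAddMonoidHom_apply, map_sum]
  exact memFW_sum _ fun i _ => memFW_diagonal_single hp i (hd i)

theorem memFW_one (hp : 2 ≤ p) : memFW b (1 : Matrix (Fin n) (Fin n) ℝ) := by
  simpa using memFW_diagonal (b := b) hp zero_le_one

theorem memFWV_transpose_mul_self (hp : 2 ≤ p) (V : Matrix (Fin n) (Fin n) ℝ) :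
    memFWV b V (Vᵀ * V) :=
  ⟨1, memFW_one hp, by rw [Matrix.mul_one]⟩

end FactorWidthTwo

theorem outer_approx_monotone_step_general {n m p : ℕ} (hp : 2 ≤ p) (b : Fin n → Fin p)
    (C : Matrix (Fin n) (Fin n) ℝ) (A : Fin m → Matrix (Fin n) (Fin n) ℝ)
    (g : Fin m → ℝ)
    (V' : Matrix (Fin n) (Fin n) ℝ) (y : Fin m → ℝ)
    (hV' : V'ᵀ * V' = C - ∑ i : Fin m, y i • A i) :
    y ∈ Dset b C A V' ∧
    (BddAbove {r : ℝ | ∃ z ∈ Dset b C A V', r = g ⬝ᵥ z} →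
      g ⬝ᵥ y ≤ sSup {r : ℝ | ∃ z ∈ Dset b C A V', r = g ⬝ᵥ z}) := by
  have hy' : y ∈ Dset b C A V' := by
    change memFWV b V' _
    rw [← hV']
    exact memFWV_transpose_mul_self hp V'
  exact ⟨hy', fun hbdd => le_csSup hbdd ⟨y, hy', rfl⟩⟩

theorem outer_approx_monotone_step {n m p : ℕ} (hp : 2 ≤ p) (b : Fin n → Fin p)
    (C : Matrix (Fin n) (Fin n) ℝ) (A : Fin m → Matrix (Fin n) (Fin n) ℝ)
    (g : Fin m → ℝ) (hC : C.IsSymm) (hAs : ∀ i, (A i).IsSymm)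
    (V V' : Matrix (Fin n) (Fin n) ℝ) (y : Fin m → ℝ)
    (hy : y ∈ Dset b C A V)
    (hV' : V'ᵀ * V' = C - ∑ i : Fin m, y i • A i) :
    y ∈ Dset b C A V' ∧
    (BddAbove {r : ℝ | ∃ z ∈ Dset b C A V', r = g ⬝ᵥ z} →
      g ⬝ᵥ y ≤ sSup {r : ℝ | ∃ z ∈ Dset b C A V', r = g ⬝ᵥ z}) :=
  outer_approx_monotone_step_general hp b C A g V' y hV'
end

section
/- (Theorem 3: strictly increasing lower bounds.) Let n, m, p ∈ ℕ with p ≥ 2, b : Fin n → Fin p a block assignment map, C, A_1, …, A_m real symmetric n×n matrices and g ∈ ℝ^m. Suppose: (i) y_t ∈ ℝ^m is such that Z_t := C − Σ_{i=1}^m (y_t)_i A_i is positive definite; (ii) y★ ∈ ℝ^m is such that C − Σ_{i=1}^m (y★)_i A_i is positive semidefinite and gᵀ y★ > gᵀ y_t; (iii) V' is a real n×n matrix with V'ᵀ V' = Z_t. Then there exists λ ∈ (0,1) such that ŷ := (1−λ)·y_t + λ·y★ satisfies ŷ ∈ D(V') and gᵀ ŷ > gᵀ y_t. In particular, if y_t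 attains the outer-approximation value L^t at iteration t with C − Σ_i (y_t)_i A_i positive definite and L^t < d★, then L^t < L^{t+1} ≤ d★. -/
open Matrix Finset

/-!
Since `V'ᵀ V' = Z_t` is positive definite, `V'` is invertible and `Z★ = V'ᵀ W V'` for a symmetric
`W`, so the slack of `ŷ` is `V'ᵀ ((1 - λ) I + λ W) V'`, and it suffices that `(1 - λ) I + λ W ∈ FW_b`
for some small `λ > 0`. A symmetric `M` with `(p - 1) ∑_{j ≠ i} |M i j| ≤ M i i` lies in `FW_b`: divide the entries
of `M` inside diagonal blocks by `p - 1`, the number of pairs of blocks containing a given block, and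
restrict the result to each pair of blocks; the pieces sum to `M` and are diagonally dominant, hence
positive semidefinite by Gershgorin's theorem. For small `λ`, `(1 - λ) I + λ W` is such an `M`.
-/
theorem Matrix.PosSemidef.of_sum_abs_le_diag {ι : Type*} [Fintype ι] [DecidableEq ι]
    {M : Matrix ι ι ℝ} (hM : M.IsHermitian) (h : ∀ i, ∑ j ∈ univ.erase i, |M i j| ≤ M i i) :
    M.PosSemidef := by
  refine hM.posSemidef_iff_eigenvalues_nonneg.mpr fun i ↦ show 0 ≤ hM.eigenvalues i from ?_
  have hμ : Module.End.HasEigenvalue (toLin' M) (hM.eigenvalues i) := .of_mem_spectrum <| by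
    rw [spectrum_toLin']; exact hM.eigenvalues_mem_spectrum_real i
  obtain ⟨k, hk⟩ := eigenvalue_mem_ball hμ
  rw [Metric.mem_closedBall, Real.dist_eq] at hk
  simp only [Real.norm_eq_abs] at hk
  linarith [h k, neg_abs_le (hM.eigenvalues i - M k k)]

theorem sum_Ioi_ite_mem_pair {p : ℕ} (r s : Fin p) :
    ∑ k : Fin p, ∑ l ∈ Ioi k, (if (r = k ∨ r = l) ∧ (s = k ∨ s = l) then (1 : ℝ) else 0) =
      if r = s then (p : ℝ) - 1 else 1 := by
  split_ifs with hrs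
  · subst hrs
    have hrow : ∀ k, ∑ l ∈ Ioi k, (if (r = k ∨ r = l) ∧ (r = k ∨ r = l) then (1 : ℝ) else 0) =
        (if r = k then ((Ioi r).card : ℝ) else 0) + if k < r then 1 else 0 := by
      intro k
      rcases lt_trichotomy k r with h | rfl | h
      · rw [sum_eq_single_of_mem r (mem_Ioi.mpr h)] <;> grind
      · simp
      · rw [sum_eq_zero] <;> grind
    rw [sum_congr rfl fun k _ ↦ hrow k, sum_add_distrib, sum_ite_eq, sum_boole]
    simp only [mem_univ, if_true]
    have := r.isLt
    rw [filter_gt_eq_Iio, Fin.card_Ioi, Fin.card_Iio, ← Nat.cast_add,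
      Nat.sub_add_cancel (by omega), Nat.cast_pred (by omega)]
  · wlog hlt : r < s generalizing r s
    · simpa only [and_comm] using this s r (Ne.symm hrs) (by grind)
    rw [sum_eq_single r, sum_eq_single_of_mem s (mem_Ioi.mpr hlt)]
    · simp
    · grind
    · intro k _ hk
      exact sum_eq_zero fun l hl ↦ if_neg (by grind)
    · simp

theorem one_le_natCast_sub_one {p : ℕ} (hp : 2 ≤ p) : (1 : ℝ) ≤ p - 1 := by
  have : (2 : ℝ) ≤ p := by exact_mod_cast hp
  linarith

section BlockDecomposition

variable {n p : ℕ} (b : Fin n → Fin p)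

noncomputable def blockReweight (M : Matrix (Fin n) (Fin n) ℝ) : Matrix (Fin n) (Fin n) ℝ :=
  of fun i j ↦ if b i = b j then M i j / (p - 1) else M i j

def pairRestrict (k l : Fin p) (M : Matrix (Fin n) (Fin n) ℝ) : Matrix (Fin n) (Fin n) ℝ :=
  of fun i j ↦ if (b i = k ∨ b i = l) ∧ (b j = k ∨ b j = l) then M i j else 0

theorem sum_pairRestrict_blockReweight (hp : 2 ≤ p) (M : Matrix (Fin n) (Fin n) ℝ) :
    ∑ k, ∑ l ∈ Ioi k, pairRestrict b k l (blockReweight b M) = M := by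
  have hp1 : (p : ℝ) - 1 ≠ 0 := by linarith [one_le_natCast_sub_one hp]
  ext i j
  simp only [Matrix.sum_apply, pairRestrict, of_apply]
  trans blockReweight b M i j *
    ∑ k, ∑ l ∈ Ioi k, if (b i = k ∨ b i = l) ∧ (b j = k ∨ b j = l) then (1 : ℝ) else 0
  · simp only [mul_sum, mul_boole]
  rw [sum_Ioi_ite_mem_pair, blockReweight, of_apply]
  split_ifs <;> field_simp

theorem posSemidef_pairRestrict_blockReweight (hp : 2 ≤ p) {M : Matrix (Fin n) (Fin n) ℝ}
    (hM : M.IsHermitian) (hdom : ∀ i, (p - 1 : ℝ) * ∑ j ∈ univ.erase i, |M i j| ≤ M i i)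
    (k l : Fin p) : (pairRestrict b k l (blockReweight b M)).PosSemidef := by
  have hp1 := one_le_natCast_sub_one hp
  have habs : ∀ i j, |blockReweight b M i j| ≤ |M i j| := by
    intro i j
    simp only [blockReweight, of_apply]
    split_ifs
    · rw [abs_div, abs_of_pos (show (0 : ℝ) < p - 1 by linarith)]
      exact div_le_self (abs_nonneg _) hp1
    · rfl
  apply PosSemidef.of_sum_abs_le_diag
  · have hMs : ∀ i j, M j i = M i j := fun i j ↦ by simpa using hM.apply i j
    ext i j
    simp only [conjTranspose_apply, star_trivial, pairRestrict, blockReweight, of_apply, hMs j i,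
      eq_comm (a := b j)]
    split_ifs <;> tauto
  · intro i
    by_cases hi : b i = k ∨ b i = l
    · calc ∑ j ∈ univ.erase i, |pairRestrict b k l (blockReweight b M) i j|
          ≤ ∑ j ∈ univ.erase i, |M i j| := sum_le_sum fun j _ ↦ by
            simp only [pairRestrict, of_apply]
            split_ifs
            exacts [habs i j, by simp]
        _ ≤ M i i / (p - 1) := by
            rw [le_div_iff₀ (show (0 : ℝ) < p - 1 by linarith), mul_comm]
            exact hdom i
        _ = pairRestrict b k l (blockReweight b M) i i := by
            simp [pairRestrict, blockReweight, hi]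
    · simp [pairRestrict, hi]

theorem memFW_of_sum_abs_le_diag (hp : 2 ≤ p) {M : Matrix (Fin n) (Fin n) ℝ}
    (hM : M.IsHermitian) (hdom : ∀ i, (p - 1 : ℝ) * ∑ j ∈ univ.erase i, |M i j| ≤ M i i) :
    memFW b M :=
  ⟨fun k l ↦ pairRestrict b k l (blockReweight b M),
    fun k l _ ↦ posSemidef_pairRestrict_blockReweight b hp hM hdom k l,
    fun k l _ i j hij ↦ if_neg (by tauto), (sum_pairRestrict_blockReweight b hp M).symm⟩

theorem exists_memFW_one_sub_smul_one_add_smul (hp : 2 ≤ p)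
    {W : Matrix (Fin n) (Fin n) ℝ} (hW : W.IsHermitian) :
    ∃ lam ∈ Set.Ioo (0 : ℝ) 1, memFW b ((1 - lam) • 1 + lam • W) := by
  have hp1 := one_le_natCast_sub_one hp
  set S := ∑ i, ∑ j, |W i j|
  have hS : 0 ≤ S := by positivity
  set lam := 1 / (2 + (p - 1) * S)
  have hlam : lam * (2 + (p - 1) * S) = 1 := by simp only [lam]; field_simp
  have hlam0 : 0 < lam := by positivity
  have hpS : 0 ≤ (p - 1) * S := mul_nonneg (by linarith) hS
  refine ⟨lam, ⟨hlam0, by nlinarith⟩, memFW_of_sum_abs_le_diag b hp ?_ fun i ↦ ?_⟩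
  · exact (isHermitian_one.smul (.all _)).add (hW.smul (.all _))
  · have hrow : ∑ j ∈ univ.erase i, |W i j| + |W i i| ≤ S := by
      rw [sum_erase_add _ _ (mem_univ i)]
      exact single_le_sum (f := fun i ↦ ∑ j, |W i j|) (fun _ _ ↦ by positivity) (mem_univ i)
    have hoff : ∀ j ∈ univ.erase i, ((1 - lam) • (1 : Matrix (Fin n) (Fin n) ℝ) + lam • W) i j =
        lam * W i j := fun j hj ↦ by simp [one_apply_ne' (ne_of_mem_erase hj)]
    rw [sum_congr rfl fun j hj ↦ congrArg abs (hoff j hj)]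
    simp only [abs_mul, abs_of_pos hlam0, ← mul_sum, Matrix.add_apply, Matrix.smul_apply,
      one_apply_eq, smul_eq_mul, mul_one]
    calc (p - 1) * (lam * ∑ j ∈ univ.erase i, |W i j|)
        ≤ (p - 1) * (lam * (S - |W i i|)) := by gcongr; linarith
      _ ≤ (p - 1) * lam * S - lam * |W i i| := by
          nlinarith [mul_nonneg hlam0.le (abs_nonneg (W i i))]
      _ = 1 - 2 * lam - lam * |W i i| := by linear_combination hlam
      _ ≤ 1 - lam + lam * W i i := by nlinarith [neg_abs_le (W i i)]

end BlockDecomposition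

theorem exists_isHermitian_transpose_mul_mul_eq {n : Type*} [Fintype n] [DecidableEq n]
    {V Z : Matrix n n ℝ} (hV : IsUnit V.det) (hZ : Z.IsHermitian) :
    ∃ W : Matrix n n ℝ, W.IsHermitian ∧ Vᵀ * W * V = Z := by
  refine ⟨(V⁻¹)ᵀ * Z * V⁻¹, by simpa using isHermitian_conjTranspose_mul_mul V⁻¹ hZ, ?_⟩
  rw [Matrix.mul_assoc, Matrix.mul_assoc, nonsing_inv_mul _ hV,
    Matrix.mul_one, ← Matrix.mul_assoc, ← transpose_mul, nonsing_inv_mul _ hV, transpose_one,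
    Matrix.one_mul]

theorem sub_sum_smul_one_sub_smul_add_smul {ι E : Type*} [Fintype ι] [AddCommGroup E]
    [Module ℝ E] (c : E) (a : ι → E) (y z : ι → ℝ) (t : ℝ) :
    c - ∑ i, ((1 - t) • y + t • z) i • a i =
      (1 - t) • (c - ∑ i, y i • a i) + t • (c - ∑ i, z i • a i) := by
  simp only [Pi.add_apply, Pi.smul_apply, smul_eq_mul, add_smul, mul_smul, sum_add_distrib,
    ← smul_sum]
  module

theorem outer_approx_strict_increase_general {n m p : ℕ} (hp : 2 ≤ p) (b : Fin n → Fin p)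
    (C : Matrix (Fin n) (Fin n) ℝ) (A : Fin m → Matrix (Fin n) (Fin n) ℝ)
    (g : Fin m → ℝ)
    (yt ystar : Fin m → ℝ) (V' : Matrix (Fin n) (Fin n) ℝ)
    (hZt : (C - ∑ i : Fin m, yt i • A i).PosDef)
    (hystar : (C - ∑ i : Fin m, ystar i • A i).PosSemidef)
    (hgt : g ⬝ᵥ yt < g ⬝ᵥ ystar)
    (hV' : V'ᵀ * V' = C - ∑ i : Fin m, yt i • A i) :
    ∃ lam : ℝ, lam ∈ Set.Ioo (0 : ℝ) 1 ∧
      ((1 - lam) • yt + lam • ystar) ∈ Dset b C A V' ∧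
      g ⬝ᵥ yt < g ⬝ᵥ ((1 - lam) • yt + lam • ystar) := by
  have hV : IsUnit V'.det := by
    have := hZt.det_pos
    rw [← hV', det_mul, det_transpose] at this
    exact isUnit_iff_ne_zero.mpr fun h ↦ by simp [h] at this
  obtain ⟨W, hW, hVWV⟩ := exists_isHermitian_transpose_mul_mul_eq hV hystar.isHermitian
  obtain ⟨lam, hlam, hFW⟩ := exists_memFW_one_sub_smul_one_add_smul b hp hW
  refine ⟨lam, hlam, ⟨_, hFW, ?_⟩, ?_⟩
  · rw [sub_sum_smul_one_sub_smul_add_smul, ← hV', ← hVWV, Matrix.mul_add, Matrix.add_mul,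
      Matrix.mul_smul, Matrix.smul_mul, Matrix.mul_smul, Matrix.smul_mul, Matrix.mul_one]
  · rw [dotProduct_add, dotProduct_smul, dotProduct_smul, smul_eq_mul, smul_eq_mul]
    nlinarith [mul_pos hlam.1 (sub_pos.mpr hgt)]

theorem outer_approx_strict_increase {n m p : ℕ} (hp : 2 ≤ p) (b : Fin n → Fin p)
    (C : Matrix (Fin n) (Fin n) ℝ) (A : Fin m → Matrix (Fin n) (Fin n) ℝ)
    (g : Fin m → ℝ) (hC : C.IsSymm) (hAs : ∀ i, (A i).IsSymm)
    (yt ystar : Fin m → ℝ) (V' : Matrix (Fin n) (Fin n) ℝ)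
    (hZt : (C - ∑ i : Fin m, yt i • A i).PosDef)
    (hystar : (C - ∑ i : Fin m, ystar i • A i).PosSemidef)
    (hgt : g ⬝ᵥ yt < g ⬝ᵥ ystar)
    (hV' : V'ᵀ * V' = C - ∑ i : Fin m, yt i • A i) :
    ∃ lam : ℝ, lam ∈ Set.Ioo (0 : ℝ) 1 ∧
      ((1 - lam) • yt + lam • ystar) ∈ Dset b C A V' ∧
      g ⬝ᵥ yt < g ⬝ᵥ ((1 - lam) • yt + lam • ystar) :=
  outer_approx_strict_increase_general hp b C A g yt ystar V' hZt hystar hgt hV'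
end
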